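/- arXiv:1112.3639 — 5 statements merged into one kernel-verified Lean document; each statement's English description precedes it below -/
import Mathlib

section
/- The run transform is multiplicative in the following sense: for formal power series f and g over a commutative ring, Φ(x·f(x)·g(x)) = x·Φ(f)·Φ(g), where Φ(f) denotes the two-variable power series ((1-x)/(1-xy))·f(x(1-x)/(1-xy)). -/
open PowerSeries MvPowerSeries Finset

/-- Substitution of a bivariate power series with zero constant term (and positive
order in every monomial) into a univariate formal power series, defined
coefficient-wise. -/
noncomputable def substPS {R : Type*} [CommRing R]
    (a : MvPowerSeries (Fin 2) R) (f : PowerSeries R) : MvPowerSeries (Fin 2) R :=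
  fun d => ∑ n ∈ Finset.range (d 0 + d 1 + 1),
    (PowerSeries.coeff n f) * MvPowerSeries.coeff d (a ^ n)

/-- The run transform `Φ(f)(x,y) = ((1-x)/(1-xy)) · f(x(1-x)/(1-xy))`. -/
noncomputable def runTransform {R : Type*} [CommRing R] (f : PowerSeries R) :
    MvPowerSeries (Fin 2) R :=
  (1 - MvPowerSeries.X 0) * MvPowerSeries.invOfUnit (1 - MvPowerSeries.X 0 * MvPowerSeries.X 1) 1 *
    substPS ((MvPowerSeries.X 0 * (1 - MvPowerSeries.X 0)) *
      MvPowerSeries.invOfUnit (1 - MvPowerSeries.X 0 * MvPowerSeries.X 1) 1) f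

/-! Once `substPS` is identified with Mathlib's `PowerSeries.subst`, which is a ring
homomorphism sending `X` to the substituted series `a = x(1-x)/(1-xy)`, the identity
reduces to `(1-x)/(1-xy) · a · F · G = x · ((1-x)/(1-xy))² · F · G`, which is just the
definition of `a`. -/

theorem MvPowerSeries.coeff_pow_eq_zero_of_degree_lt {σ R : Type*} [CommSemiring R]
    {a : MvPowerSeries σ R} (ha : MvPowerSeries.constantCoeff a = 0) {d : σ →₀ ℕ} {n : ℕ}
    (h : d.degree < n) : MvPowerSeries.coeff d (a ^ n) = 0 :=
  coeff_of_lt_order <| (Nat.cast_lt.2 h).trans_le (le_order_pow_of_constantCoeff_eq_zero n ha)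

/-- The cut-off `n ≤ d 0 + d 1` in `substPS` loses nothing: beyond it `a ^ n` has no
coefficient in degree `d`. -/
theorem substPS_eq_subst {R : Type*} [CommRing R] {a : MvPowerSeries (Fin 2) R}
    (ha : MvPowerSeries.constantCoeff a = 0) (f : PowerSeries R) :
    substPS a f = PowerSeries.subst a f := by
  ext d
  have hdeg : d.degree = d 0 + d 1 := by simp [Finsupp.degree_eq_sum, Fin.sum_univ_two]
  rw [coeff_subst (HasSubst.of_constantCoeff_zero ha),
    finsum_eq_sum_of_support_subset (s := range (d 0 + d 1 + 1))]
  · rfl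
  · intro n hn
    rw [coe_range, Set.mem_Iio]
    by_contra! hlt
    exact hn <| by
      simp only [coeff_pow_eq_zero_of_degree_lt ha (by omega : d.degree < n), smul_zero]

section

variable {R : Type*} [CommRing R]

theorem hasSubst_runTransform_arg :
    HasSubst (MvPowerSeries.X 0 * (1 - MvPowerSeries.X 0) *
      MvPowerSeries.invOfUnit (1 - MvPowerSeries.X 0 * MvPowerSeries.X 1) 1 :
        MvPowerSeries (Fin 2) R) :=
  HasSubst.of_constantCoeff_zero (by simp)

theorem runTransform_eq_subst (f : PowerSeries R) :
    runTransform f = (1 - MvPowerSeries.X 0) *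
      MvPowerSeries.invOfUnit (1 - MvPowerSeries.X 0 * MvPowerSeries.X 1) 1 *
        PowerSeries.subst (MvPowerSeries.X 0 * (1 - MvPowerSeries.X 0) *
          MvPowerSeries.invOfUnit (1 - MvPowerSeries.X 0 * MvPowerSeries.X 1) 1) f :=
  congrArg _ (substPS_eq_subst (by simp) f)

end

/-- `Φ(x·f·g) = x·Φ(f)·Φ(g)`. -/
theorem runTransform_mul {R : Type*} [CommRing R] (f g : PowerSeries R) :
    runTransform (PowerSeries.X * f * g) =
      MvPowerSeries.X 0 * runTransform f * runTransform g := by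
  simp only [runTransform_eq_subst, subst_mul hasSubst_runTransform_arg,
    subst_X hasSubst_runTransform_arg]
  ring
end

section
/- Let C(x,y) = Φ(C(x)) be the run transform of the Catalan generating function. Then C(x,y) satisfies the quadratic equation x·C(x,y)^2 − C(x,y) + (1-x)/(1-xy) = 0, i.e., x·C(x,y)^2 = C(x,y) − (1-x)/(1-xy) as bivariate formal power series. -/
open PowerSeries MvPowerSeries Finset

/-- The Catalan generating function `C(x) = Σ C_n x^n` (over `ℤ`). -/
noncomputable def catalanGF : PowerSeries ℤ := PowerSeries.mk fun n => (catalan n : ℤ)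

/-! When `a` has zero constant term, the coefficient-wise substitution `substPS a` agrees with
Mathlib's `PowerSeries.subst a`, hence is a ring homomorphism. Applying it to `C = 1 + x C²`
with `a = x u`, `u = (1-x)/(1-xy)`, gives `S = 1 + a S²` for `S = C(a)`; since `Φ(C) = u S`,
multiplying by `u` yields `x (u S)² = u S - u`. -/

namespace MvPowerSeries

variable {σ R : Type*} [CommRing R]

theorem coeff_pow_eq_zero_of_degree_lt_s4 {a : MvPowerSeries σ R} (ha : constantCoeff a = 0)
    {n : ℕ} {d : σ →₀ ℕ} (hd : d.degree < n) : coeff d (a ^ n) = 0 :=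
  coeff_of_lt_order <| (Nat.cast_lt.mpr hd).trans_le (le_order_pow_of_constantCoeff_eq_zero n ha)

end MvPowerSeries

theorem catalanGF_eq_map_catalanSeries :
    catalanGF = PowerSeries.map (Nat.castRingHom ℤ) catalanSeries := by
  ext n
  simp [catalanGF, catalanSeries_coeff]

theorem catalanGF_eq_one_add_X_mul_sq : catalanGF = 1 + PowerSeries.X * catalanGF ^ 2 := by
  rw [catalanGF_eq_map_catalanSeries]
  conv_lhs => rw [← catalanSeries_sq_mul_X_add_one]
  simp only [map_add, map_mul, map_pow, PowerSeries.map_X, map_one]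
  ring

/-- `C(x,y) = Φ(C(x))` satisfies `x·C(x,y)^2 = C(x,y) − (1-x)/(1-xy)`. -/
theorem runTransform_catalan_quadratic :
    MvPowerSeries.X 0 * runTransform catalanGF ^ 2 =
      runTransform catalanGF -
        (1 - MvPowerSeries.X 0) *
          MvPowerSeries.invOfUnit (1 - MvPowerSeries.X 0 * MvPowerSeries.X 1) 1 := by
  set u : MvPowerSeries (Fin 2) ℤ := (1 - MvPowerSeries.X 0) *
    MvPowerSeries.invOfUnit (1 - MvPowerSeries.X 0 * MvPowerSeries.X 1) 1
  set a : MvPowerSeries (Fin 2) ℤ := MvPowerSeries.X 0 * u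
  have ha : MvPowerSeries.constantCoeff a = 0 := by simp [a]
  have hS : substPS a catalanGF = 1 + a * substPS a catalanGF ^ 2 := by
    rw [substPS_eq_subst ha, ← PowerSeries.coe_substAlgHom (.of_constantCoeff_zero ha)]
    conv_lhs => rw [catalanGF_eq_one_add_X_mul_sq]
    rw [map_add, map_one, map_mul, map_pow, PowerSeries.substAlgHom_X]
  have hrun : runTransform catalanGF = u * substPS a catalanGF := by
    simp only [runTransform, u, a, mul_assoc]
  rw [hrun]
  linear_combination (-u) * hS
end

section
/- The two infinite lower-unitriangular-type matrices C = (binom(2j−i, j−i) − binom(2j−i, j−i−1))_{i,j≥0} and D = ((−1)^{j−i}·binom(i+1, j−i))_{i,j≥0} are mutually inverse: Σ_k C_{i,k} D_{k,j} = δ_{i,j} for all i, j ≥ 0 (the sum is finite since both matrices are upper triangular). -/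
/-!
With `c = 1 + x c²` the Catalan series, row `i` of `C` has generating function `x^i c(x)^(i+1)`
and `D_{kj}` is the coefficient of `x^j` in `x^k (1 - x)^(k+1)`. Hence `(CD)_{ij}` is the
coefficient of `x^j` in `(1 - x) q^i c(q)^(i+1)` with `q = x(1 - x)`. Both `c(q)` and
`1/(1 - x)` solve `s = 1 + q s²`, whose solution is unique, so `(1 - x) c(q) = 1` and `(CD)_{ij}`
is the coefficient of `x^j` in `x^i`.
-/

/-- Binomial coefficient `binom(n,k)` for an integer `k`, with the convention that it
vanishes for `k < 0`. -/
def binomZ (n : ℕ) (k : ℤ) : ℤ := if 0 ≤ k then (n.choose k.toNat : ℤ) else 0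

/-- The Catalan convolution matrix `C_{i,j} = binom(2j−i, j−i) − binom(2j−i, j−i−1)`. -/
def catalanMat (i j : ℕ) : ℤ :=
  binomZ (2 * j - i) ((j : ℤ) - i) - binomZ (2 * j - i) ((j : ℤ) - i - 1)

/-- The claimed inverse matrix `D_{i,j} = (−1)^{j−i}·binom(i+1, j−i)`. -/
def catalanMatInv (i j : ℕ) : ℤ := (-1) ^ (j - i) * binomZ (i + 1) ((j : ℤ) - i)

open PowerSeries

namespace PowerSeries

variable {R : Type*} [CommRing R]

theorem coeff_one_sub_X_pow (n k : ℕ) :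
    coeff k ((1 - X : R⟦X⟧) ^ n) = (-1) ^ k * n.choose k := by
  have : (1 - X : R⟦X⟧) ^ n = rescale (-1) ((1 + X) ^ n) := by
    rw [map_pow, map_add, map_one, rescale_neg_one_X, sub_eq_add_neg]
  rw [this, coeff_rescale, ← Polynomial.coe_X, ← Polynomial.coe_one, ← Polynomial.coe_add,
    ← Polynomial.coe_pow, Polynomial.coeff_coe, Polynomial.coeff_one_add_X_pow]

theorem coeff_mul_subst_eq_sum_range {q : R⟦X⟧} (hq : constantCoeff q = 0) (g f : R⟦X⟧)
    (N : ℕ) :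
    coeff N (g * f.subst q) = ∑ m ∈ Finset.range (N + 1), coeff m f * coeff N (g * q ^ m) := by
  have hsub := HasSubst.of_constantCoeff_zero' hq
  obtain ⟨r, hr⟩ : ∃ r, f = X ^ (N + 1) * r + (trunc (N + 1) f : R⟦X⟧) :=
    ⟨_, eq_X_pow_mul_shift_add_trunc (N + 1) f⟩
  have hsplit : f.subst q =
      q ^ (N + 1) * r.subst q + ∑ m ∈ Finset.range (N + 1), C (coeff m f) * q ^ m := by
    conv_lhs => rw [hr]
    rw [subst_add hsub, subst_mul hsub, subst_pow hsub, subst_X hsub, subst_coe hsub,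
      Polynomial.aeval_def, eval₂_trunc_eq_sum_range]
    rfl
  have htail : coeff N (g * (q ^ (N + 1) * r.subst q)) = 0 := by
    refine X_pow_dvd_iff.mp ?_ N N.lt_succ_self
    exact Dvd.dvd.mul_left (Dvd.dvd.mul_right (pow_dvd_pow_of_dvd (X_dvd_iff.mpr hq) _) _) _
  rw [hsplit, mul_add, map_add, htail, zero_add, Finset.mul_sum, map_sum]
  refine Finset.sum_congr rfl fun m _ => ?_
  rw [mul_left_comm, coeff_C_mul]

end PowerSeries

/-- The coefficient of `x^m` in `c(x)^k`, `c` the Catalan series. -/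
def ballot (k : ℕ) : ℕ → ℤ
  | 0 => 1
  | m + 1 => ((k + 2 * m + 1).choose (m + 1) : ℤ) - (k + 2 * m + 1).choose m

theorem ballot_zero_succ (m : ℕ) : ballot 0 (m + 1) = 0 := by
  rw [ballot, sub_eq_zero, Nat.choose_symm_of_eq_add (by omega : 0 + 2 * m + 1 = (m + 1) + m)]

theorem ballot_one (m : ℕ) : ballot 1 m = catalan m := by
  cases m with
  | zero => simp [ballot]
  | succ m =>
    have hpascal := Nat.choose_succ_right_eq (2 * m + 2) m
    have hcentral := succ_mul_catalan_eq_centralBinom (m + 1)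
    rw [Nat.centralBinom, show 2 * (m + 1) = 2 * m + 2 by ring] at hcentral
    rw [show 2 * m + 2 - m = m + 2 by omega] at hpascal
    refine mul_left_cancel₀ (show (m + 2 : ℤ) ≠ 0 by positivity) ?_
    rw [ballot, show 1 + 2 * m + 1 = 2 * m + 2 by ring]
    zify at hpascal hcentral
    linear_combination hpascal - hcentral

theorem ballot_succ_succ (k m : ℕ) :
    ballot (k + 1) (m + 1) = ballot k (m + 1) + ballot (k + 2) m := by
  cases m with
  | zero => simp [ballot]
  | succ m =>
    have h1 := Nat.choose_succ_succ' (k + 2 * m + 3) (m + 1)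
    have h2 := Nat.choose_succ_succ' (k + 2 * m + 3) m
    simp only [ballot]
    rw [show k + 1 + 2 * (m + 1) + 1 = k + 2 * m + 3 + 1 by ring,
      show k + 2 * (m + 1) + 1 = k + 2 * m + 3 by ring,
      show k + 2 + 2 * m + 1 = k + 2 * m + 3 by ring, h1, h2]
    push_cast
    ring

theorem catalanSeries_map_int :
    catalanSeries.map (Nat.castRingHom ℤ) =
      1 + X * (catalanSeries.map (Nat.castRingHom ℤ)) ^ 2 := by
  conv_lhs => rw [← catalanSeries_sq_mul_X_add_one]
  rw [map_add, map_mul, map_pow, map_X, map_one]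
  ring

theorem mk_ballot_zero : mk (ballot 0) = 1 := by
  ext (_ | m)
  · simp [ballot]
  · rw [coeff_mk, ballot_zero_succ, coeff_one, if_neg m.succ_ne_zero]

theorem mk_ballot_one : mk (ballot 1) = catalanSeries.map (Nat.castRingHom ℤ) := by
  ext m
  rw [coeff_mk, ballot_one, coeff_map, catalanSeries_coeff, eq_natCast]

theorem mk_ballot_succ_sub (k : ℕ) :
    mk (ballot (k + 1)) - mk (ballot k) = X * mk (ballot (k + 2)) := by
  ext (_ | m)
  · simp [ballot]
  · rw [map_sub, coeff_succ_X_mul, coeff_mk, coeff_mk, coeff_mk, ballot_succ_succ,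
      add_sub_cancel_left]

theorem mk_ballot_eq_pow (k : ℕ) :
    mk (ballot k) = (catalanSeries.map (Nat.castRingHom ℤ)) ^ k := by
  set c := catalanSeries.map (Nat.castRingHom ℤ)
  induction k using Nat.twoStepInduction with
  | zero => rw [mk_ballot_zero, pow_zero]
  | one => rw [mk_ballot_one, pow_one]
  | more k ih₀ ih₁ =>
    refine X_mul_cancel ?_
    calc X * mk (ballot (k + 2)) = c ^ k * (c - 1) := by
          rw [← mk_ballot_succ_sub, ih₀, ih₁]; ring
      _ = X * c ^ (k + 2) := by
          nth_rewrite 2 [show c = 1 + X * c ^ 2 from catalanSeries_map_int]; ring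

theorem one_sub_X_mul_subst_catalanSeries :
    (1 - X) * (catalanSeries.map (Nat.castRingHom ℤ)).subst (X * (1 - X) : ℤ⟦X⟧) = 1 := by
  have hq : HasSubst (X * (1 - X) : ℤ⟦X⟧) := HasSubst.of_constantCoeff_zero' (by simp)
  set s : ℤ⟦X⟧ := (catalanSeries.map (Nat.castRingHom ℤ)).subst (X * (1 - X) : ℤ⟦X⟧)
    with hsdef
  have hs : s = 1 + X * (1 - X) * s ^ 2 := by
    conv_lhs => rw [hsdef, catalanSeries_map_int]
    rw [subst_add hq, subst_mul hq, subst_pow hq, subst_X hq, ← map_one (C (R := ℤ)), subst_C]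
    rfl
  have hfactor : ((1 - X) * s - 1) * (1 - X * ((1 - X) * s + 1)) = 0 := by
    linear_combination (1 - X) * hs
  have hne : (1 - X * ((1 - X) * s + 1) : ℤ⟦X⟧) ≠ 0 := fun h => by
    simpa using congrArg constantCoeff h
  exact sub_eq_zero.mp ((mul_eq_zero.mp hfactor).resolve_right hne)

theorem sum_ballot_mul_neg_one_pow_choose (k N : ℕ) :
    ∑ m ∈ Finset.range (N + 1), ballot k m * ((-1) ^ (N - m) * ((k + m).choose (N - m) : ℤ)) =
      if N = 0 then 1 else 0 := by
  have hq : constantCoeff (X * (1 - X) : ℤ⟦X⟧) = 0 := by simp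
  calc _ = coeff N ((1 - X) ^ k * (mk (ballot k)).subst (X * (1 - X) : ℤ⟦X⟧)) := by
        rw [coeff_mul_subst_eq_sum_range hq]
        refine Finset.sum_congr rfl fun m hm => ?_
        have hmN : m ≤ N := Nat.lt_succ_iff.mp (Finset.mem_range.mp hm)
        symm
        rw [coeff_mk, mul_pow, mul_left_comm, ← pow_add, coeff_X_pow_mul', if_pos hmN,
          add_comm k m, coeff_one_sub_X_pow]
    _ = coeff N 1 := by
        rw [mk_ballot_eq_pow, subst_pow (HasSubst.of_constantCoeff_zero' hq), ← mul_pow,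
          one_sub_X_mul_subst_catalanSeries, one_pow]
    _ = _ := coeff_one N

theorem binomZ_natCast (n k : ℕ) : binomZ n k = n.choose k := by
  simp [binomZ]

theorem catalanMat_self_add (i m : ℕ) : catalanMat i (i + m) = ballot (i + 1) m := by
  have hsize : 2 * (i + m) - i = i + 2 * m := by omega
  cases m with
  | zero => simp [catalanMat, binomZ, ballot]
  | succ m =>
    rw [catalanMat, hsize, show ((i + (m + 1) : ℕ) : ℤ) - i = (m + 1 : ℕ) by push_cast; ring,
      show ((m + 1 : ℕ) : ℤ) - 1 = (m : ℕ) by push_cast; ring, binomZ_natCast, binomZ_natCast,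
      ballot, show i + 2 * (m + 1) = i + 1 + 2 * m + 1 by ring]

theorem catalanMatInv_self_add (k n : ℕ) :
    catalanMatInv k (k + n) = (-1) ^ n * (k + 1).choose n := by
  rw [catalanMatInv, Nat.add_sub_cancel_left,
    show ((k + n : ℕ) : ℤ) - k = (n : ℕ) by push_cast; ring, binomZ_natCast]

/-- the two matrices are mutually inverse: `Σ_k C_{i,k} D_{k,j} = δ_{i,j}`.
Both matrices are upper triangular, so the sum may be restricted to `i ≤ k ≤ j`. -/
theorem catalanMat_mul_inv (i j : ℕ) :
    ∑ k ∈ Finset.Icc i j, catalanMat i k * catalanMatInv k j =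
      if i = j then 1 else 0 := by
  rcases le_or_gt i j with hij | hji
  · obtain ⟨N, rfl⟩ := Nat.exists_eq_add_of_le hij
    rw [← Finset.Ico_add_one_right_eq_Icc, Finset.sum_Ico_eq_sum_range,
      show i + N + 1 - i = N + 1 by omega]
    calc _ = ∑ m ∈ Finset.range (N + 1),
          ballot (i + 1) m * ((-1) ^ (N - m) * ((i + 1 + m).choose (N - m) : ℤ)) := by
          refine Finset.sum_congr rfl fun m hm => ?_
          rw [catalanMat_self_add, show i + N = i + m + (N - m) by
            have := Finset.mem_range.mp hm; omega, catalanMatInv_self_add, add_right_comm]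
      _ = _ := by simp only [sum_ballot_mul_neg_one_pow_choose, Nat.left_eq_add]
  · rw [Finset.Icc_eq_empty_of_lt hji, Finset.sum_empty, if_neg hji.ne']
end

section
/- For every m ≥ 0, the generating function Σ_{n≥0} |N_{m,n}| x^{m+n} equals x^m · C(x)^{m+1}, where N_{m,n} is the set of lattice paths with n upsteps (1,1) and m+n downsteps (1,-1) that never dip below the horizontal line through their terminal vertex, and C(x) is the Catalan generating function. -/
/-!
Classify paths by their first step: removing an upstep from a path of `N_{m,n+1}` leaves an
arbitrary path of `N_{m+1,n}`, removing a downstep from a path of `N_{m+1,n}` leaves an arbitrary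
path of `N_{m,n}`, and no path of `N_{0,n}` starts with a downstep. Hence `|N_{m,n}|` obeys the
recurrence of the coefficients `[x^n] C(x)^{m+1}`, which comes from `C^{k+1} = C^k + x C^{k+2}`,
i.e. from `C = 1 + x C²`.
-/

/-- `N m n`: the number of lattice paths (encoded as lists of `Bool`, `true` = upstep
`(1,1)`, `false` = downstep `(1,-1)`, read left to right) with `n` upsteps and `m + n`
downsteps that never dip below the horizontal line through their terminal vertex
(equivalently, every suffix has at least as many downsteps as upsteps). -/
noncomputable def Npaths (m n : ℕ) : ℕ :=
  Nat.card {l : List Bool // l.count true = n ∧ l.count false = m + n ∧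
    ∀ s ∈ l.tails, s.count true ≤ s.count false}

open PowerSeries

theorem Set.ncard_eq_ncard_preimage_cons_true_add_false {S : Set (List Bool)}
    (hS : S.Finite) (hnil : [] ∉ S) :
    S.ncard = (List.cons true ⁻¹' S).ncard + (List.cons false ⁻¹' S).ncard := by
  have hfin (b : Bool) : (List.cons b '' (List.cons b ⁻¹' S)).Finite :=
    (hS.preimage List.cons_injective.injOn).image _
  have hsplit : S = List.cons true '' (List.cons true ⁻¹' S) ∪
      List.cons false '' (List.cons false ⁻¹' S) := by
    ext (_ | ⟨_ | _, t⟩) <;> simp [hnil]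
  have hdisj : Disjoint (List.cons true '' (List.cons true ⁻¹' S))
      (List.cons false '' (List.cons false ⁻¹' S)) := by
    simp [Set.disjoint_left]
  conv_lhs => rw [hsplit]
  rw [Set.ncard_union_eq hdisj (hfin true) (hfin false),
    Set.ncard_image_of_injective _ List.cons_injective,
    Set.ncard_image_of_injective _ List.cons_injective]

def npathSet (m n : ℕ) : Set (List Bool) :=
  {l | l.count true = n ∧ l.count false = m + n ∧
    ∀ s ∈ l.tails, s.count true ≤ s.count false}

theorem npaths_eq_ncard (m n : ℕ) : Npaths m n = (npathSet m n).ncard :=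
  Nat.card_coe_set_eq _

theorem npathSet_finite (m n : ℕ) : (npathSet m n).Finite :=
  (List.finite_length_eq Bool (m + 2 * n)).subset fun l ⟨ht, hf, _⟩ => by
    rw [Set.mem_ofPred_eq, ← List.count_true_add_count_false, ht, hf]; ring

-- The suffix condition for the whole path is implied by the step counts `n ≤ m + n`.
theorem cons_mem_npathSet {m n : ℕ} {b : Bool} {t : List Bool} :
    b :: t ∈ npathSet m n ↔ (b :: t).count true = n ∧ (b :: t).count false = m + n ∧
      ∀ s ∈ t.tails, s.count true ≤ s.count false := by
  simp only [npathSet, Set.mem_ofPred_eq, List.tails_cons, List.forall_mem_cons]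
  grind

theorem npathSet_zero_zero : npathSet 0 0 = {[]} := by
  ext (_ | ⟨b, t⟩)
  · simp [npathSet]
  · simp only [cons_mem_npathSet, Set.mem_singleton_iff, reduceCtorEq, iff_false]
    cases b <;> simp

theorem preimage_cons_true_npathSet_zero (m : ℕ) :
    List.cons true ⁻¹' npathSet m 0 = ∅ := by
  ext t
  simp [cons_mem_npathSet]

theorem preimage_cons_true_npathSet_succ (m n : ℕ) :
    List.cons true ⁻¹' npathSet m (n + 1) = npathSet (m + 1) n := by
  ext t
  rw [Set.mem_preimage, cons_mem_npathSet]
  simp only [npathSet, List.count_cons_self]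
  grind

theorem preimage_cons_false_npathSet_succ (m n : ℕ) :
    List.cons false ⁻¹' npathSet (m + 1) n = npathSet m n := by
  ext t
  rw [Set.mem_preimage, cons_mem_npathSet]
  simp only [npathSet, List.count_cons_self]
  grind

theorem preimage_cons_false_npathSet_zero (n : ℕ) :
    List.cons false ⁻¹' npathSet 0 n = ∅ := by
  refine Set.eq_empty_of_forall_notMem fun t ⟨ht, hf, h⟩ => ?_
  have := h t ((List.mem_tails _ _).2 ⟨[false], rfl⟩)
  simp only [List.count_cons_self, List.count_cons_of_ne Bool.false_ne_true, zero_add] at ht hf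
  omega

theorem npaths_eq_ncard_preimage_cons_add {m n : ℕ} (h : m ≠ 0 ∨ n ≠ 0) :
    Npaths m n = (List.cons true ⁻¹' npathSet m n).ncard +
      (List.cons false ⁻¹' npathSet m n).ncard := by
  refine (npaths_eq_ncard m n).trans
    (Set.ncard_eq_ncard_preimage_cons_true_add_false (npathSet_finite m n) ?_)
  rintro ⟨ht, hf, -⟩
  simp only [List.count_nil] at ht hf
  omega

theorem npaths_zero_right (m : ℕ) : Npaths m 0 = 1 := by
  induction m with
  | zero => rw [npaths_eq_ncard, npathSet_zero_zero, Set.ncard_singleton]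
  | succ m ih =>
    rw [npaths_eq_ncard_preimage_cons_add (.inl m.succ_ne_zero), preimage_cons_true_npathSet_zero,
      preimage_cons_false_npathSet_succ, ← npaths_eq_ncard, ih, Set.ncard_empty, zero_add]

theorem npaths_zero_succ (n : ℕ) : Npaths 0 (n + 1) = Npaths 1 n := by
  rw [npaths_eq_ncard_preimage_cons_add (.inr n.succ_ne_zero), preimage_cons_true_npathSet_succ,
    preimage_cons_false_npathSet_zero, ← npaths_eq_ncard, Set.ncard_empty, add_zero]

theorem npaths_succ_succ (m n : ℕ) :
    Npaths (m + 1) (n + 1) = Npaths (m + 2) n + Npaths m (n + 1) := by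
  rw [npaths_eq_ncard_preimage_cons_add (.inl m.succ_ne_zero), preimage_cons_true_npathSet_succ,
    preimage_cons_false_npathSet_succ, ← npaths_eq_ncard, ← npaths_eq_ncard]

theorem catalanSeries_pow_succ (k : ℕ) :
    catalanSeries ^ (k + 1) = catalanSeries ^ k + catalanSeries ^ (k + 2) * X := by
  calc catalanSeries ^ (k + 1) = catalanSeries ^ k * (catalanSeries ^ 2 * X + 1) := by
        rw [catalanSeries_sq_mul_X_add_one, pow_succ]
    _ = catalanSeries ^ k + catalanSeries ^ (k + 2) * X := by ring

theorem coeff_succ_catalanSeries_pow_succ (k n : ℕ) :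
    coeff (n + 1) (catalanSeries ^ (k + 1)) =
      coeff (n + 1) (catalanSeries ^ k) + coeff n (catalanSeries ^ (k + 2)) := by
  rw [catalanSeries_pow_succ, map_add, coeff_succ_mul_X]

theorem npaths_eq_coeff_catalanSeries_pow (m n : ℕ) :
    Npaths m n = coeff n (catalanSeries ^ (m + 1)) := by
  induction n generalizing m with
  | zero => simp [npaths_zero_right]
  | succ n ihn =>
    induction m with
    | zero =>
      rw [npaths_zero_succ, ihn, coeff_succ_catalanSeries_pow_succ, pow_zero, coeff_one,
        if_neg n.succ_ne_zero, zero_add]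
    | succ m ihm =>
      rw [npaths_succ_succ, coeff_succ_catalanSeries_pow_succ, ihn, ihm, add_comm]

/-- `Σ_n |N_{m,n}| x^{m+n} = x^m · C(x)^{m+1}`. -/
theorem npaths_gf (m : ℕ) :
    (PowerSeries.mk fun N => if m ≤ N then Npaths m (N - m) else 0 : PowerSeries ℕ) =
      PowerSeries.X ^ m * (PowerSeries.mk fun n => catalan n) ^ (m + 1) := by
  ext N
  rw [coeff_mk, coeff_X_pow_mul']
  split_ifs
  · exact npaths_eq_coeff_catalanSeries_pow m (N - m)
  · rfl
end

section
/- Fix a run-free standard s-partition π of size k, and let F(n) be the set of standard s-partitions of size n obtainable from π by successively inserting runs. For n > k, the run-deletion sequences of members of F(n), recorded as first entries (a_1,...,a_r) and lengths (ℓ_1,...,ℓ_r) in reverse order of deletion, are exactly the sequences with r ≥ 1, all a_i, ℓ_i positive integers, k + ℓ_1 + ... + ℓ_r = n, a_1 < a_2 < ... < a_r, and a_i ≤ k + ℓ_1 + ... + ℓ_{i-1} + 1 for each 1 ≤ i ≤ r. Consequently, the number of s-partitions of size n that prune to π depends only on k, not on π itself. -/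
/-- The size of an s-partition (a set of lists): the total number of entries. -/
def sizeS (π : Finset (List ℕ)) : ℕ := π.sum List.length

/-- `π` is a standard s-partition of size `n`: a set of nonempty lists whose entries,
taken all together, are exactly `1, 2, ..., n` (each appearing once). -/
def IsStdSPart (π : Finset (List ℕ)) (n : ℕ) : Prop :=
  [] ∉ π ∧ π.val.bind (fun l => (l : Multiset ℕ)) = (Finset.Icc 1 n).val

/-- A block is a run if it consists of increasing consecutive integers. -/
def IsRunBlock (l : List ℕ) : Prop := ∃ a, 1 ≤ a ∧ l = List.range' a l.length

/-- `π` is run-free: no block is a run. -/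
def RunFree (π : Finset (List ℕ)) : Prop := ∀ l ∈ π, ¬IsRunBlock l

/-- Insert the run `i+1, ..., i+j` into `π`: increment all entries exceeding `i` by `j`
and adjoin the run as a new block. -/
def insertRun (π : Finset (List ℕ)) (i j : ℕ) : Finset (List ℕ) :=
  π.image (List.map fun m => if i < m then m + j else m) ∪ {List.range' (i + 1) j}

/-- One insertion of a (nonempty) run at a valid position. -/
def InsertStep (σ τ : Finset (List ℕ)) : Prop :=
  ∃ i j, 1 ≤ j ∧ i ≤ sizeS σ ∧ τ = insertRun σ i j

/-- `ρ` is obtainable from `π` by successively inserting runs. -/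
def ReachableFrom (π ρ : Finset (List ℕ)) : Prop := Relation.ReflTransGen InsertStep π ρ
/-- Admissible run-deletion sequences for a run-free s-partition of size `k` and target
size `n`, recorded as pairs (first entry `a_i`, length `ℓ_i`) in reverse order of
deletion: all entries positive, `k + ℓ_1 + ... + ℓ_r = n`, `a_1 < a_2 < ... < a_r`, and
`a_i ≤ k + ℓ_1 + ... + ℓ_{i-1} + 1` for each `i`. -/
def Admissible (k n : ℕ) (s : List (ℕ × ℕ)) : Prop :=
  s ≠ [] ∧ (∀ p ∈ s, 1 ≤ p.1 ∧ 1 ≤ p.2) ∧ k + (s.map Prod.snd).sum = n ∧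
    List.Chain' (· < ·) (s.map Prod.fst) ∧
    ∀ t < s.length, (s.getD t (0, 0)).1 ≤ k + ((s.take t).map Prod.snd).sum + 1

/-- Build an s-partition from `π` by inserting the runs recorded in `s`, in order:
the pair `(a, ℓ)` inserts the run `a, a+1, ..., a+ℓ-1`. -/
def buildFrom (π : Finset (List ℕ)) (s : List (ℕ × ℕ)) : Finset (List ℕ) :=
  s.foldl (fun σ p => insertRun σ (p.1 - 1) p.2) π

/-!
Inserting a run at position `i' ≤ i` after one at position `i` gives the same result as
inserting the two in the other order, the later one shifted right by the length of the earlier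
one. So every sequence of insertions can be reordered so that the first entries increase, and
then the conditions on positions are exactly admissibility.

For injectivity: insertion never turns a non-run into a run. So when the first entries
increase and `π` is run-free, every run of the result starts at some `a_i`. The last inserted
run `a_r, …, a_r + ℓ_r - 1` is a block, so `a_r` is the largest first entry of a run, and
`ℓ_r` is the length of that block. Undoing this last insertion and inducting recovers the whole
sequence. The count is then the number of admissible sequences, which does not involve `π`.
-/

def shiftAbove (i j m : ℕ) : ℕ := if i < m then m + j else m

theorem shiftAbove_strictMono (i j : ℕ) : StrictMono (shiftAbove i j) := by
  intro a b h
  unfold shiftAbove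
  split_ifs <;> omega

theorem shiftAbove_of_le {i j m : ℕ} (h : m ≤ i) : shiftAbove i j m = m :=
  if_neg (by omega)

theorem shiftAbove_comp_shiftAbove_of_le {i i' j j' : ℕ} (h : i' ≤ i) :
    shiftAbove i' j' ∘ shiftAbove i j = shiftAbove (i + j') j ∘ shiftAbove i' j' := by
  funext m
  simp only [Function.comp, shiftAbove]
  split_ifs <;> omega

theorem eq_add_one_of_shiftAbove_eq_add_one {i j x y : ℕ}
    (h : shiftAbove i j y = shiftAbove i j x + 1) : y = x + 1 := by
  unfold shiftAbove at h
  split_ifs at h <;> omega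

theorem map_shiftAbove_range'_of_lt {i j a n : ℕ} (h : i < a) :
    (List.range' a n).map (shiftAbove i j) = List.range' (a + j) n := by
  rw [add_comm, ← List.map_add_range']
  refine List.map_congr_left fun m hm => ?_
  rw [List.mem_range'_1] at hm
  simp only [shiftAbove, if_pos (show i < m by omega), add_comm]

theorem map_shiftAbove_range'_of_le {i j a n : ℕ} (h : a + n ≤ i + 1) :
    (List.range' a n).map (shiftAbove i j) = List.range' a n := by
  refine (List.map_congr_left fun m hm => ?_).trans (List.map_id _)
  rw [List.mem_range'_1] at hm
  exact shiftAbove_of_le (by omega)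

theorem map_shiftAbove_Icc_add_range' {N i j : ℕ} (hi : i ≤ N) :
    (Finset.Icc 1 N).val.map (shiftAbove i j) + (List.range' (i + 1) j : Multiset ℕ) =
      (Finset.Icc 1 (N + j)).val := by
  have hnodup : ((Finset.Icc 1 N).val.map (shiftAbove i j) +
      (List.range' (i + 1) j : Multiset ℕ)).Nodup := by
    refine Multiset.nodup_add.2 ⟨(Finset.Icc 1 N).nodup.map (shiftAbove_strictMono i j).injective,
      Multiset.coe_nodup.2 List.nodup_range', Multiset.disjoint_left.2 ?_⟩
    simp only [Multiset.mem_map, Finset.mem_val, Finset.mem_Icc, Multiset.mem_coe,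
      List.mem_range'_1]
    rintro _ ⟨m, hm, rfl⟩
    unfold shiftAbove
    split_ifs <;> omega
  refine (hnodup.ext (Finset.Icc 1 (N + j)).nodup).2 fun m => ?_
  simp only [Multiset.mem_add, Multiset.mem_map, Finset.mem_val, Finset.mem_Icc,
    Multiset.mem_coe, List.mem_range'_1]
  constructor
  · rintro (⟨m, hm, rfl⟩ | hm)
    · unfold shiftAbove; split_ifs <;> omega
    · omega
  · intro hm
    by_cases hlow : m ≤ i
    · exact Or.inl ⟨m, by omega, shiftAbove_of_le hlow⟩
    by_cases hrun : m ≤ i + j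
    · exact Or.inr (by omega)
    · exact Or.inl ⟨m - j, by omega, by simp only [shiftAbove]; split_ifs <;> omega⟩

section InsertRun

variable {σ : Finset (List ℕ)} {i j : ℕ}

theorem insertRun_eq (σ : Finset (List ℕ)) (i j : ℕ) :
    insertRun σ i j = σ.image (List.map (shiftAbove i j)) ∪ {List.range' (i + 1) j} := rfl

theorem range'_mem_insertRun : List.range' (i + 1) j ∈ insertRun σ i j :=
  Finset.mem_union_right _ (Finset.mem_singleton_self _)

theorem range'_notMem_image_map_shiftAbove (hj : 1 ≤ j) :
    List.range' (i + 1) j ∉ σ.image (List.map (shiftAbove i j)) := by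
  simp only [Finset.mem_image, not_exists, not_and]
  intro l _ hl
  have hmem : i + 1 ∈ l.map (shiftAbove i j) := by
    rw [hl, List.mem_range'_1]; omega
  obtain ⟨m, -, hm⟩ := List.mem_map.1 hmem
  unfold shiftAbove at hm
  split_ifs at hm <;> omega

theorem insertRun_val (hj : 1 ≤ j) :
    (insertRun σ i j).val = List.range' (i + 1) j ::ₘ σ.val.map (List.map (shiftAbove i j)) := by
  rw [insertRun_eq, Finset.union_comm, ← Finset.insert_eq,
    Finset.insert_val_of_notMem (range'_notMem_image_map_shiftAbove hj),
    Finset.image_val_of_injOn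
      (List.map_injective_iff.2 (shiftAbove_strictMono i j).injective).injOn]

theorem insertRun_left_injective (hj : 1 ≤ j) :
    Function.Injective fun σ : Finset (List ℕ) => insertRun σ i j := by
  intro σ τ h
  have herase : ∀ ν : Finset (List ℕ), (insertRun ν i j).erase (List.range' (i + 1) j) =
      ν.image (List.map (shiftAbove i j)) := fun ν => by
    rw [insertRun_eq, Finset.union_comm, ← Finset.insert_eq,
      Finset.erase_insert (range'_notMem_image_map_shiftAbove hj)]
  have himage := herase σ
  rw [show insertRun σ i j = insertRun τ i j from h, herase τ] at himage
  exact Finset.image_injective (List.map_injective_iff.2 (shiftAbove_strictMono i j).injective)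
    himage.symm

theorem insertRun_insertRun_of_le {i' j' : ℕ} (h : i' ≤ i) :
    insertRun (insertRun σ i j) i' j' = insertRun (insertRun σ i' j') (i + j') j := by
  simp only [insertRun_eq, Finset.image_union, Finset.image_image, Finset.image_singleton,
    List.map_comp_map, shiftAbove_comp_shiftAbove_of_le h,
    map_shiftAbove_range'_of_lt (show i' < i + 1 by omega),
    map_shiftAbove_range'_of_le (show i' + 1 + j' ≤ i + j' + 1 by omega),
    show i + 1 + j' = i + j' + 1 by omega]
  ac_rfl

end InsertRun

namespace IsStdSPart

variable {σ : Finset (List ℕ)} {N : ℕ}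

theorem sizeS_eq (hσ : IsStdSPart σ N) : sizeS σ = N := by
  have hcard := congrArg Multiset.card hσ.2
  rw [Multiset.card_bind, ← Finset.card_def, Nat.card_Icc, Nat.add_sub_cancel] at hcard
  rw [← hcard, sizeS, Finset.sum]
  rfl

theorem eq_of_mem_of_mem (hσ : IsStdSPart σ N) {l₁ l₂ : List ℕ} (h₁ : l₁ ∈ σ) (h₂ : l₂ ∈ σ)
    {m : ℕ} (hm₁ : m ∈ l₁) (hm₂ : m ∈ l₂) : l₁ = l₂ := by
  by_contra hne
  have hnodup : (σ.val.bind fun l => (l : Multiset ℕ)).Nodup := hσ.2 ▸ (Finset.Icc 1 N).nodup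
  rw [← Multiset.cons_erase h₁, Multiset.cons_bind, Multiset.nodup_add] at hnodup
  refine Multiset.disjoint_left.1 hnodup.2.2 (Multiset.mem_coe.2 hm₁) ?_
  exact Multiset.mem_bind.2 ⟨l₂, (Multiset.mem_erase_of_ne (Ne.symm hne)).2 h₂, hm₂⟩

theorem insertRun (hσ : IsStdSPart σ N) {i j : ℕ} (hi : i ≤ N) (hj : 1 ≤ j) :
    IsStdSPart (insertRun σ i j) (N + j) := by
  refine ⟨fun hnil => ?_, ?_⟩
  · rcases Finset.mem_union.1 hnil with hnil | hnil
    · obtain ⟨l, hl, hl0⟩ := Finset.mem_image.1 hnil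
      exact hσ.1 (List.map_eq_nil_iff.1 hl0 ▸ hl)
    · have hlen := congrArg List.length (Finset.mem_singleton.1 hnil)
      simp only [List.length_nil, List.length_range'] at hlen
      omega
  · rw [insertRun_val hj, Multiset.cons_bind, Multiset.bind_map, add_comm]
    simp only [← Multiset.map_coe, ← Multiset.map_bind, hσ.2]
    exact map_shiftAbove_Icc_add_range' hi

end IsStdSPart

theorem isRunBlock_range' {a ℓ : ℕ} (ha : 1 ≤ a) : IsRunBlock (List.range' a ℓ) :=
  ⟨a, ha, by rw [List.length_range']⟩

theorem cons_eq_range'_of_map_shiftAbove {i j : ℕ} :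
    ∀ {l : List ℕ} {x : ℕ},
      (x :: l).map (shiftAbove i j) = List.range' (shiftAbove i j x) (l.length + 1) →
        x :: l = List.range' x (l.length + 1)
  | [], _, _ => rfl
  | y :: t, x, h => by
    simp only [List.map_cons, List.length_cons, List.range'_succ, List.cons.injEq, true_and]
      at h ⊢
    obtain ⟨hy, ht⟩ := h
    obtain rfl := eq_add_one_of_shiftAbove_eq_add_one hy
    rw [← hy] at ht
    simpa [List.range'_succ] using
      cons_eq_range'_of_map_shiftAbove (l := t) (by simpa [List.range'_succ] using ht)

theorem IsRunBlock.of_map_shiftAbove {i j : ℕ} {l : List ℕ}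
    (h : IsRunBlock (l.map (shiftAbove i j))) : IsRunBlock l := by
  obtain ⟨b, hb, hl⟩ := h
  cases l with
  | nil => exact ⟨1, le_rfl, rfl⟩
  | cons x t =>
    have hx : shiftAbove i j x = b := by
      simpa [List.range'_succ] using congrArg List.head? hl
    subst hx
    refine ⟨x, ?_, cons_eq_range'_of_map_shiftAbove (by simpa using hl)⟩
    unfold shiftAbove at hb
    split_ifs at hb <;> omega

def runHeads (ρ : Finset (List ℕ)) : Set ℕ :=
  {a | ∃ l ∈ ρ, IsRunBlock l ∧ l.head? = some a}

theorem RunFree.runHeads_eq_empty {π : Finset (List ℕ)} (hπ : RunFree π) : runHeads π = ∅ :=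
  Set.eq_empty_of_forall_notMem fun _ ⟨l, hl, hrun, _⟩ => hπ l hl hrun

theorem runHeads_insertRun_subset (σ : Finset (List ℕ)) (i j : ℕ) :
    runHeads (insertRun σ i j) ⊆ insert (i + 1) (shiftAbove i j '' runHeads σ) := by
  rintro a ⟨l, hl, hrun, hhead⟩
  rcases Finset.mem_union.1 hl with hl | hl
  · obtain ⟨l₀, hl₀, rfl⟩ := Finset.mem_image.1 hl
    rw [List.head?_map, Option.map_eq_some_iff] at hhead
    obtain ⟨a₀, ha₀, rfl⟩ := hhead
    exact Or.inr ⟨a₀, ⟨l₀, hl₀, hrun.of_map_shiftAbove, ha₀⟩, rfl⟩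
  · rw [Finset.mem_singleton.1 hl, List.head?_range'] at hhead
    split_ifs at hhead
    exact Or.inl (Option.some_injective _ hhead).symm

-- `k` is the size before the insertions; each run must start at most one past the current size.
def IsInsertSeq : ℕ → List (ℕ × ℕ) → Prop
  | _, [] => True
  | k, p :: t => 1 ≤ p.1 ∧ 1 ≤ p.2 ∧ p.1 ≤ k + 1 ∧ IsInsertSeq (k + p.2) t

theorem IsInsertSeq.pos : ∀ {k : ℕ} {s : List (ℕ × ℕ)}, IsInsertSeq k s →
    ∀ p ∈ s, 1 ≤ p.1 ∧ 1 ≤ p.2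
  | _, [], _ => by simp
  | _, _ :: _, ⟨ha, hℓ, _, hs⟩ => List.forall_mem_cons.2 ⟨⟨ha, hℓ⟩, hs.pos⟩

theorem isInsertSeq_iff {k : ℕ} {s : List (ℕ × ℕ)} : IsInsertSeq k s ↔
    (∀ p ∈ s, 1 ≤ p.1 ∧ 1 ≤ p.2) ∧
      ∀ t < s.length, (s.getD t (0, 0)).1 ≤ k + ((s.take t).map Prod.snd).sum + 1 := by
  induction s generalizing k with
  | nil => simp [IsInsertSeq]
  | cons q u ih =>
    simp only [IsInsertSeq, ih, List.forall_mem_cons, List.length_cons, Nat.forall_lt_succ_left,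
      List.getD_cons_zero, List.take_zero, List.getD_cons_succ, List.take_succ_cons,
      List.map_cons, List.map_nil, List.sum_cons, List.sum_nil, add_assoc]
    tauto

theorem isInsertSeq_append_singleton {k : ℕ} {t : List (ℕ × ℕ)} {p : ℕ × ℕ} :
    IsInsertSeq k (t ++ [p]) ↔
      IsInsertSeq k t ∧ 1 ≤ p.1 ∧ 1 ≤ p.2 ∧ p.1 ≤ k + (t.map Prod.snd).sum + 1 := by
  induction t generalizing k with
  | nil => simp [IsInsertSeq]
  | cons q u ih =>
    simp only [List.cons_append, IsInsertSeq, ih, List.map_cons, List.sum_cons, add_assoc]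
    tauto

theorem buildFrom_cons (π : Finset (List ℕ)) (p : ℕ × ℕ) (s : List (ℕ × ℕ)) :
    buildFrom π (p :: s) = buildFrom (insertRun π (p.1 - 1) p.2) s := rfl

theorem buildFrom_append_singleton (π : Finset (List ℕ)) (s : List (ℕ × ℕ)) (p : ℕ × ℕ) :
    buildFrom π (s ++ [p]) = insertRun (buildFrom π s) (p.1 - 1) p.2 :=
  List.foldl_concat ..

section Build

variable {π : Finset (List ℕ)} {k : ℕ}

theorem IsStdSPart.buildFrom (hπ : IsStdSPart π k) {s : List (ℕ × ℕ)} (hs : IsInsertSeq k s) :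
    IsStdSPart (buildFrom π s) (k + (s.map Prod.snd).sum) := by
  induction s using List.reverseRecOn with
  | nil => exact hπ
  | append_singleton t p ih =>
    obtain ⟨ht, -, hℓ, hak⟩ := isInsertSeq_append_singleton.1 hs
    rw [buildFrom_append_singleton, List.map_append, List.sum_append, ← add_assoc]
    simpa using (ih ht).insertRun (by omega) hℓ

theorem reachableFrom_buildFrom (hπ : IsStdSPart π k) {s : List (ℕ × ℕ)}
    (hs : IsInsertSeq k s) : ReachableFrom π (buildFrom π s) := by
  induction s using List.reverseRecOn with
  | nil => exact Relation.ReflTransGen.refl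
  | append_singleton t p ih =>
    obtain ⟨ht, -, hℓ, hak⟩ := isInsertSeq_append_singleton.1 hs
    refine (ih ht).tail ⟨p.1 - 1, p.2, hℓ, ?_, buildFrom_append_singleton π t p⟩
    rw [(hπ.buildFrom ht).sizeS_eq]
    omega

theorem ReachableFrom.exists_buildFrom (hπ : IsStdSPart π k) {ρ : Finset (List ℕ)}
    (h : ReachableFrom π ρ) : ∃ s, IsInsertSeq k s ∧ ρ = buildFrom π s := by
  induction h with
  | refl => exact ⟨[], trivial, rfl⟩
  | tail _ hstep ih =>
    obtain ⟨s, hs, rfl⟩ := ih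
    obtain ⟨i, j, hj, hi, rfl⟩ := hstep
    rw [(hπ.buildFrom hs).sizeS_eq] at hi
    refine ⟨s ++ [(i + 1, j)], isInsertSeq_append_singleton.2 ⟨hs, by simp, hj, by simpa⟩, ?_⟩
    rw [buildFrom_append_singleton, Nat.add_sub_cancel]

end Build

-- Insertion sort by first entry: moving `p` past an insertion `q` with `q.1 ≤ p.1` shifts `p`
-- by `q.2` (`insertRun_insertRun_of_le`).
def pushRun : ℕ × ℕ → List (ℕ × ℕ) → List (ℕ × ℕ)
  | p, [] => [p]
  | p, q :: u => if p.1 < q.1 then p :: q :: u else q :: pushRun (p.1 + q.2, p.2) u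

def sortRuns : List (ℕ × ℕ) → List (ℕ × ℕ)
  | [] => []
  | p :: t => pushRun p (sortRuns t)

theorem buildFrom_pushRun : ∀ (σ : Finset (List ℕ)) (p : ℕ × ℕ) (s : List (ℕ × ℕ)),
    1 ≤ p.1 → buildFrom σ (pushRun p s) = buildFrom σ (p :: s)
  | _, _, [], _ => rfl
  | σ, p, q :: u, hp => by
    unfold pushRun
    split_ifs with hpq
    · rfl
    · rw [buildFrom_cons, buildFrom_pushRun _ _ _ (by omega)]
      simp only [buildFrom_cons]
      rw [insertRun_insertRun_of_le (i := p.1 - 1) (by omega), Nat.sub_add_comm hp]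

theorem IsInsertSeq.pushRun : ∀ {k : ℕ} {p : ℕ × ℕ} {s : List (ℕ × ℕ)},
    IsInsertSeq k (p :: s) → IsInsertSeq k (pushRun p s)
  | _, _, [], h => h
  | k, p, q :: u, ⟨ha, hℓ, hak, hb, hm, hbk, hu⟩ => by
    unfold _root_.pushRun
    split_ifs with hpq
    · exact ⟨ha, hℓ, hak, hb, hm, hbk, hu⟩
    · refine ⟨hb, hm, by omega, IsInsertSeq.pushRun ⟨by omega, hℓ, by omega, ?_⟩⟩
      rwa [add_right_comm]

theorem sum_map_snd_pushRun : ∀ (p : ℕ × ℕ) (s : List (ℕ × ℕ)),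
    ((pushRun p s).map Prod.snd).sum = p.2 + (s.map Prod.snd).sum
  | _, [] => by simp [pushRun]
  | p, q :: u => by
    unfold pushRun
    split_ifs
    · simp
    · simp only [List.map_cons, List.sum_cons, sum_map_snd_pushRun]
      omega

theorem mem_map_fst_pushRun : ∀ {p : ℕ × ℕ} {s : List (ℕ × ℕ)} {x : ℕ},
    x ∈ (pushRun p s).map Prod.fst → x ∈ s.map Prod.fst ∨ p.1 ≤ x
  | _, [], _, hx => by simp_all [pushRun]
  | p, q :: u, x, hx => by
    unfold pushRun at hx
    split_ifs at hx with hpq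
    · rcases List.mem_cons.1 hx with rfl | hx
      · exact Or.inr le_rfl
      · exact Or.inl hx
    · rcases List.mem_cons.1 hx with rfl | hx
      · exact Or.inl List.mem_cons_self
      · rcases mem_map_fst_pushRun hx with hx | hx
        · exact Or.inl (List.mem_cons_of_mem _ hx)
        · exact Or.inr (by simp only at hx; omega)

theorem pairwise_map_fst_pushRun : ∀ {p : ℕ × ℕ} {s : List (ℕ × ℕ)},
    (∀ q ∈ s, 1 ≤ q.2) → (s.map Prod.fst).Pairwise (· < ·) →
      ((pushRun p s).map Prod.fst).Pairwise (· < ·)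
  | _, [], _, _ => by simp [pushRun]
  | p, q :: u, hpos, hsorted => by
    rw [List.map_cons, List.pairwise_cons] at hsorted
    unfold pushRun
    split_ifs with hpq
    · rw [List.map_cons, List.pairwise_cons, List.map_cons]
      refine ⟨fun x hx => ?_, List.pairwise_cons.2 hsorted⟩
      rcases List.mem_cons.1 hx with rfl | hx
      · exact hpq
      · exact hpq.trans (hsorted.1 x hx)
    · rw [List.map_cons, List.pairwise_cons]
      refine ⟨fun x hx => ?_, pairwise_map_fst_pushRun (fun r hr => hpos r
        (List.mem_cons_of_mem _ hr)) hsorted.2⟩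
      have hq := hpos q List.mem_cons_self
      rcases mem_map_fst_pushRun hx with hx | hx
      · exact hsorted.1 x hx
      · simp only at hx; omega

theorem buildFrom_sortRuns (σ : Finset (List ℕ)) {t : List (ℕ × ℕ)} (ht : ∀ p ∈ t, 1 ≤ p.1) :
    buildFrom σ (sortRuns t) = buildFrom σ t := by
  induction t generalizing σ with
  | nil => rfl
  | cons p u ih =>
    rw [List.forall_mem_cons] at ht
    rw [sortRuns, buildFrom_pushRun _ _ _ ht.1, buildFrom_cons, ih _ ht.2, buildFrom_cons]

theorem IsInsertSeq.sortRuns {k : ℕ} {t : List (ℕ × ℕ)} (ht : IsInsertSeq k t) :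
    IsInsertSeq k (sortRuns t) := by
  induction t generalizing k with
  | nil => trivial
  | cons p u ih =>
    obtain ⟨ha, hℓ, hak, hu⟩ := ht
    exact IsInsertSeq.pushRun ⟨ha, hℓ, hak, ih hu⟩

theorem sum_map_snd_sortRuns (t : List (ℕ × ℕ)) :
    ((sortRuns t).map Prod.snd).sum = (t.map Prod.snd).sum := by
  induction t with
  | nil => rfl
  | cons p u ih => simp [sortRuns, sum_map_snd_pushRun, ih]

theorem pairwise_map_fst_sortRuns {k : ℕ} {t : List (ℕ × ℕ)} (ht : IsInsertSeq k t) :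
    ((sortRuns t).map Prod.fst).Pairwise (· < ·) := by
  induction t generalizing k with
  | nil => exact List.Pairwise.nil
  | cons p u ih =>
    obtain ⟨-, -, -, hu⟩ := ht
    exact pairwise_map_fst_pushRun (fun q hq => (hu.sortRuns.pos q hq).2) (ih hu)

theorem range'_mem_buildFrom_append_singleton (π : Finset (List ℕ)) (u : List (ℕ × ℕ))
    {a : ℕ} (ℓ : ℕ) (ha : 1 ≤ a) : List.range' a ℓ ∈ buildFrom π (u ++ [(a, ℓ)]) := by
  rw [buildFrom_append_singleton]
  simpa only [Nat.sub_add_cancel ha] using range'_mem_insertRun (σ := buildFrom π u) (i := a - 1)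

section Injectivity

variable {π : Finset (List ℕ)} {k : ℕ}

theorem buildFrom_ne_self (hπ : RunFree π) {s : List (ℕ × ℕ)} (hs : IsInsertSeq k s)
    (hne : s ≠ []) : buildFrom π s ≠ π := by
  obtain ⟨u, ⟨a, ℓ⟩, rfl⟩ := s.eq_nil_or_concat'.resolve_left hne
  have ha := (isInsertSeq_append_singleton.1 hs).2.1
  intro h
  exact hπ _ (h ▸ range'_mem_buildFrom_append_singleton π u ℓ ha) (isRunBlock_range' ha)

theorem runHeads_buildFrom_subset : ∀ {σ : Finset (List ℕ)} {k : ℕ} {s : List (ℕ × ℕ)},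
    IsInsertSeq k s → (s.map Prod.fst).Pairwise (· < ·) →
      (∀ h ∈ runHeads σ, ∀ a ∈ s.map Prod.fst, h < a) →
        runHeads (buildFrom σ s) ⊆ runHeads σ ∪ {a | a ∈ s.map Prod.fst}
  | _, _, [], _, _, _ => Set.subset_union_left
  | σ, _, (a, ℓ) :: u, ⟨ha, _, _, hu⟩, hsorted, hlow => by
    rw [List.map_cons, List.pairwise_cons] at hsorted
    have hstep : runHeads (insertRun σ (a - 1) ℓ) ⊆ insert a (runHeads σ) := by
      intro x hx
      rcases runHeads_insertRun_subset σ _ _ hx with rfl | ⟨h, hh, rfl⟩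
      · exact Or.inl (by omega)
      · have := hlow h hh a List.mem_cons_self
        rw [shiftAbove_of_le (by omega)]
        exact Or.inr hh
    have hlow' : ∀ h ∈ runHeads (insertRun σ (a - 1) ℓ), ∀ b ∈ u.map Prod.fst, h < b := by
      intro h hh b hb
      rcases hstep hh with rfl | hh
      · exact hsorted.1 b hb
      · exact hlow h hh b (List.mem_cons_of_mem _ hb)
    intro x hx
    rcases runHeads_buildFrom_subset hu hsorted.2 hlow' hx with hx | hx
    · rcases hstep hx with rfl | hx
      · exact Or.inr List.mem_cons_self
      · exact Or.inl hx
    · exact Or.inr (List.mem_cons_of_mem _ hx)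

theorem isGreatest_runHeads_buildFrom (hπ : RunFree π) {u : List (ℕ × ℕ)} {a ℓ : ℕ}
    (hs : IsInsertSeq k (u ++ [(a, ℓ)]))
    (hsorted : ((u ++ [(a, ℓ)]).map Prod.fst).Pairwise (· < ·)) :
    IsGreatest (runHeads (buildFrom π (u ++ [(a, ℓ)]))) a := by
  obtain ⟨-, ha, hℓ, -⟩ := isInsertSeq_append_singleton.1 hs
  refine ⟨⟨_, range'_mem_buildFrom_append_singleton π u ℓ ha, isRunBlock_range' ha, ?_⟩,
    fun x hx => ?_⟩
  · rw [List.head?_range', if_neg (by omega)]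
  have hsub := runHeads_buildFrom_subset (σ := π) hs hsorted (by simp [hπ.runHeads_eq_empty])
  rw [hπ.runHeads_eq_empty, Set.empty_union] at hsub
  have hx' : x ∈ (u ++ [(a, ℓ)]).map Prod.fst := hsub hx
  rw [List.map_append] at hx' hsorted
  rw [List.pairwise_append] at hsorted
  rcases List.mem_append.1 hx' with hx | hx
  · exact (hsorted.2.2 x hx a List.mem_cons_self).le
  · exact (List.mem_singleton.1 hx).le

theorem buildFrom_injOn (hπ : IsStdSPart π k) (hrf : RunFree π) :
    Set.InjOn (buildFrom π) {s | IsInsertSeq k s ∧ (s.map Prod.fst).Pairwise (· < ·)} := by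
  intro s hs
  induction s using List.reverseRecOn with
  | nil =>
    rintro s' hs' h
    by_contra hne
    exact buildFrom_ne_self hrf hs'.1 (Ne.symm hne) h.symm
  | append_singleton u p ih =>
    rintro s' hs' h
    rcases s'.eq_nil_or_concat' with rfl | ⟨u', p', rfl⟩
    · exact absurd h (buildFrom_ne_self hrf hs.1 (by simp))
    obtain ⟨a, ℓ⟩ := p
    obtain ⟨a', ℓ'⟩ := p'
    obtain ⟨hu, ha, hℓ, -⟩ := isInsertSeq_append_singleton.1 hs.1
    obtain ⟨hu', -, hℓ', -⟩ := isInsertSeq_append_singleton.1 hs'.1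
    obtain rfl : a = a' := (isGreatest_runHeads_buildFrom hrf hs.1 hs.2).unique
      (h ▸ isGreatest_runHeads_buildFrom hrf hs'.1 hs'.2)
    obtain rfl : ℓ = ℓ' := by
      have hblock := (hπ.buildFrom hs.1).eq_of_mem_of_mem
        (range'_mem_buildFrom_append_singleton π u ℓ ha)
        (h ▸ range'_mem_buildFrom_append_singleton π u' ℓ' ha) (m := a)
        (List.mem_range'_1.2 (by omega)) (List.mem_range'_1.2 (by omega))
      simpa using congrArg List.length hblock
    rw [buildFrom_append_singleton, buildFrom_append_singleton] at h
    have hprefix : ∀ {v : List (ℕ × ℕ)} {q : ℕ × ℕ},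
        ((v ++ [q]).map Prod.fst).Pairwise (· < ·) → (v.map Prod.fst).Pairwise (· < ·) :=
      fun hv => hv.sublist ((List.sublist_append_left _ _).map _)
    rw [ih ⟨hu, hprefix hs.2⟩ ⟨hu', hprefix hs'.2⟩ (insertRun_left_injective hℓ h)]

end Injectivity

theorem admissible_iff {k n : ℕ} {s : List (ℕ × ℕ)} : Admissible k n s ↔
    s ≠ [] ∧ k + (s.map Prod.snd).sum = n ∧ IsInsertSeq k s ∧
      (s.map Prod.fst).Pairwise (· < ·) := by
  rw [Admissible, isInsertSeq_iff, ← List.isChain_iff_pairwise]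
  tauto

theorem buildFrom_bijOn {k n : ℕ} (hn : k < n) {π : Finset (List ℕ)} (hπ : IsStdSPart π k)
    (hrf : RunFree π) :
    Set.BijOn (buildFrom π) {s | Admissible k n s} {ρ | ReachableFrom π ρ ∧ sizeS ρ = n} := by
  refine ⟨fun s hs => ?_, fun s hs s' hs' => ?_, fun ρ ⟨hρ, hsize⟩ => ?_⟩
  · obtain ⟨-, hsum, hseq, -⟩ := admissible_iff.1 hs
    exact ⟨reachableFrom_buildFrom hπ hseq, hsum ▸ (hπ.buildFrom hseq).sizeS_eq⟩
  · exact buildFrom_injOn hπ hrf (admissible_iff.1 hs).2.2 (admissible_iff.1 hs').2.2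
  · obtain ⟨t, ht, rfl⟩ := hρ.exists_buildFrom hπ
    have hsum : k + ((sortRuns t).map Prod.snd).sum = n := by
      rw [sum_map_snd_sortRuns, ← hsize, (hπ.buildFrom ht).sizeS_eq]
    refine ⟨sortRuns t, admissible_iff.2 ⟨?_, hsum, ht.sortRuns, pairwise_map_fst_sortRuns ht⟩,
      buildFrom_sortRuns π fun p hp => (ht.pos p hp).1⟩
    rintro hnil
    rw [hnil] at hsum
    simp only [List.map_nil, List.sum_nil, add_zero] at hsum
    omega

/-- for a run-free standard s-partition `π` of size `k` and `n > k`,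
successive run insertion gives a bijection from the admissible sequences onto the
s-partitions of size `n` obtainable from `π`; consequently the number of s-partitions
of size `n` that prune to `π` depends only on `k`, not on `π`. -/
theorem runDeletion_char (k n : ℕ) (hn : k < n) (π : Finset (List ℕ))
    (hstd : IsStdSPart π k) (hrf : RunFree π) :
    Set.BijOn (buildFrom π) {s | Admissible k n s}
      {ρ | ReachableFrom π ρ ∧ sizeS ρ = n} ∧
    ∀ π' : Finset (List ℕ), IsStdSPart π' k → RunFree π' →
      Nat.card {ρ : Finset (List ℕ) // ReachableFrom π ρ ∧ sizeS ρ = n} =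
        Nat.card {ρ : Finset (List ℕ) // ReachableFrom π' ρ ∧ sizeS ρ = n} :=
  ⟨buildFrom_bijOn hn hstd hrf, fun _ hstd' hrf' => Nat.card_congr
    (((buildFrom_bijOn hn hstd hrf).equiv _).symm.trans ((buildFrom_bijOn hn hstd' hrf').equiv _))⟩
end
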